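/- For every even integer n ≥ 2, real a ≥ 1, and x, y ∈ (0, π): ∑_{j=1}^n C(n + a − j, n − j) · sin(jx) sin(jy)/j ≥ 2 sin(x) sin(y)(1 + cos(x) cos(y)), with equality if and only if n = 2 and a = 1. -/

import Mathlib

open Real Finset

/-- Generalized binomial coefficient `(a + k choose k) = ∏_{ν=1}^{k} (a+ν)/ν`. -/
noncomputable def gbinom (a : ℝ) (k : ℕ) : ℝ := ∏ ν ∈ Finset.Icc 1 k, (a + ν) / ν

/-- `S n a x = ∑_{j=1}^n C(n+a−j, n−j) sin(jx)`. -/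
noncomputable def S (n : ℕ) (a : ℝ) (x : ℝ) : ℝ :=
  ∑ j ∈ Finset.Icc 1 n, gbinom a (n - j) * Real.sin (j * x)

/-- `Theta n a x y = ∑_{j=1}^n C(n+a−j, n−j) sin(jx) sin(jy) / j`. -/
noncomputable def Theta (n : ℕ) (a : ℝ) (x y : ℝ) : ℝ :=
  ∑ j ∈ Finset.Icc 1 n, gbinom a (n - j) * Real.sin (j * x) * Real.sin (j * y) / j



lemma gbinom_zero (a : ℝ) : gbinom a 0 = 1 := by simp [gbinom]

lemma gbinom_succ (a : ℝ) (k : ℕ) :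
    gbinom a (k + 1) = gbinom a k * ((a + (k + 1)) / (k + 1)) := by
  rw [gbinom, gbinom, Finset.prod_Icc_succ_top (Nat.le_add_left 1 k)]
  push_cast; ring

lemma gbinom_nonneg {a : ℝ} (ha : -1 ≤ a) (k : ℕ) : 0 ≤ gbinom a k := by
  apply Finset.prod_nonneg
  intro ν hν
  rw [Finset.mem_Icc] at hν
  have h1 : (1:ℝ) ≤ (ν:ℝ) := by exact_mod_cast hν.1
  have : (0:ℝ) ≤ a + ν := by linarith
  positivity

lemma gbinom_shift (b : ℝ) (k : ℕ) :
    gbinom (b - 1) (k + 1) = gbinom b k * (b / (k + 1)) := by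
  induction k with
  | zero => simp [gbinom_succ, gbinom_zero]
  | succ K ih =>
    rw [gbinom_succ (b-1) (K+1), ih, gbinom_succ b K]
    have h1 : ((K:ℝ) + 1) ≠ 0 := by positivity
    have h2 : ((K:ℝ) + 1 + 1) ≠ 0 := by positivity
    push_cast
    field_simp
    ring

lemma gbinom_pascal (b : ℝ) (k : ℕ) :
    gbinom b (k + 1) = gbinom (b - 1) (k + 1) + gbinom b k := by
  rw [gbinom_shift, gbinom_succ]
  have h1 : ((k:ℝ) + 1) ≠ 0 := by positivity
  field_simp

lemma gbinom_hockey (c : ℝ) (K : ℕ) :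
    ∑ k ∈ Finset.range (K + 1), gbinom c k = gbinom (c + 1) K := by
  induction K with
  | zero => simp [gbinom_zero]
  | succ K ih =>
    rw [Finset.sum_range_succ, ih]
    have := gbinom_pascal (c + 1) K
    simp only [add_sub_cancel_right] at this
    linarith

lemma gbinom_vandermonde (c : ℝ) (K : ℕ) :
    gbinom (c + 2) K = ∑ k ∈ Finset.range (K + 1), ((K:ℝ) + 1 - k) * gbinom c k := by
  induction K with
  | zero => simp [gbinom_zero]
  | succ K ih =>
    have hV : ∑ k ∈ Finset.range (K + 2), ((K:ℝ) + 2 - k) * gbinom c k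
        = (∑ k ∈ Finset.range (K + 1), ((K:ℝ) + 1 - k) * gbinom c k)
          + ∑ k ∈ Finset.range (K + 2), gbinom c k := by
      have e1 : ∀ k ∈ Finset.range (K+2), ((K:ℝ) + 2 - k) * gbinom c k
          = ((K:ℝ) + 1 - k) * gbinom c k + gbinom c k := fun k _ => by ring
      rw [Finset.sum_congr rfl e1, Finset.sum_add_distrib]
      congr 1
      rw [Finset.sum_range_succ]
      simp
    have hp := gbinom_pascal (c + 2) K
    have h1 : (c + 2 - 1) = c + 1 := by ring
    rw [h1] at hp
    have hh := gbinom_hockey c (K + 1)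
    calc gbinom (c + 2) (K + 1) = gbinom (c + 1) (K + 1) + gbinom (c + 2) K := hp
      _ = (∑ k ∈ Finset.range (K + 2), gbinom c k)
          + ∑ k ∈ Finset.range (K + 1), ((K:ℝ) + 1 - k) * gbinom c k := by rw [← hh, ih]
      _ = ∑ k ∈ Finset.range (K + 1 + 1), ((K:ℝ) + 1 + 1 - k) * gbinom c k := by
            rw [show ((K:ℝ)+1+1) = (K:ℝ)+2 by ring, hV]; ring
      _ = ∑ k ∈ Finset.range (K + 1 + 1), ((↑(K + 1):ℝ) + 1 - k) * gbinom c k := by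
            exact Finset.sum_congr rfl fun k _ => by push_cast; ring


noncomputable def F (m : ℕ) (t : ℝ) : ℝ :=
  ∑ j ∈ Finset.Icc 1 m, ((m:ℝ) + 1 - j) * Real.sin (j * t)

lemma D_identity (p : ℕ) (t : ℝ) :
    2 * (1 - Real.cos t) * (∑ j ∈ Finset.Icc 1 p, Real.sin (j * t))
      = Real.sin t + Real.sin (p * t) - Real.sin ((p + 1) * t) := by
  induction p with
  | zero => simp
  | succ p ih =>
    rw [Finset.sum_Icc_succ_top (Nat.le_add_left 1 p)]
    push_cast
    rw [show ((p:ℝ) + 1 + 1) * t = ((p:ℝ) + 1) * t + t by ring, Real.sin_add]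
    rw [show (p:ℝ) * t = ((p:ℝ) + 1) * t - t by ring, Real.sin_sub] at ih
    linear_combination ih

lemma F_closed (m : ℕ) (t : ℝ) :
    2 * (1 - Real.cos t) * F m t = ((m:ℝ) + 1) * Real.sin t - Real.sin (((m:ℝ) + 1) * t) := by
  induction m with
  | zero => simp [F]
  | succ m ih =>
    have hsplit : F (m + 1) t = F m t + ∑ j ∈ Finset.Icc 1 (m+1), Real.sin (j * t) := by
      rw [F, F]
      have e1 : ∀ j ∈ Finset.Icc 1 (m+1), ((↑(m+1):ℝ) + 1 - j) * Real.sin (j * t)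
          = ((m:ℝ) + 1 - j) * Real.sin (j * t) + Real.sin (j * t) := fun j _ => by
        push_cast; ring
      rw [Finset.sum_congr rfl e1, Finset.sum_add_distrib]
      congr 1
      rw [Finset.sum_Icc_succ_top (Nat.le_add_left 1 m)]
      push_cast
      simp
    have hD := D_identity (m + 1) t
    push_cast at hD ⊢
    rw [hsplit]
    linear_combination ih + hD

lemma abs_sin_nat_le {t : ℝ} (ht : 0 ≤ Real.sin t) (k : ℕ) :
    |Real.sin (k * t)| ≤ k * Real.sin t := by
  induction k with
  | zero => simp
  | succ k ih =>
    push_cast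
    rw [show ((k:ℝ) + 1) * t = (k:ℝ) * t + t by ring, Real.sin_add]
    have h1 : |Real.sin ((k:ℝ)*t) * Real.cos t| ≤ |Real.sin ((k:ℝ)*t)| := by
      rw [abs_mul]; exact mul_le_of_le_one_right (abs_nonneg _) (Real.abs_cos_le_one t)
    have h2 : |Real.cos ((k:ℝ)*t) * Real.sin t| ≤ Real.sin t := by
      rw [abs_mul, abs_of_nonneg ht]
      exact mul_le_of_le_one_left ht (Real.abs_cos_le_one _)
    have h3 := abs_add_le (Real.sin ((k:ℝ)*t) * Real.cos t) (Real.cos ((k:ℝ)*t) * Real.sin t)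
    push_cast at ih
    calc |Real.sin ((k:ℝ)*t) * Real.cos t + Real.cos ((k:ℝ)*t) * Real.sin t|
        ≤ |Real.sin ((k:ℝ)*t)| + Real.sin t := by linarith
      _ ≤ (k:ℝ) * Real.sin t + Real.sin t := by linarith
      _ = ((k:ℝ) + 1) * Real.sin t := by ring

lemma abs_sin_nat_lt {t : ℝ} (ht0 : 0 < t) (htp : t < Real.pi) {k : ℕ} (hk : 2 ≤ k) :
    |Real.sin (k * t)| < k * Real.sin t := by
  have hs : 0 < Real.sin t := Real.sin_pos_of_pos_of_lt_pi ht0 htp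
  have hc : |Real.cos t| < 1 := by
    rw [← sq_lt_one_iff_abs_lt_one]
    have := Real.sin_sq t
    nlinarith
  induction k with
  | zero => exact absurd hk (by omega)
  | succ k ih =>
    rcases Nat.lt_or_ge k 2 with h2 | h2
    · interval_cases k
      · exact absurd hk (by omega)
      · push_cast
        rw [Real.sin_two_mul, abs_mul, abs_mul]
        rw [abs_of_nonneg (le_of_lt hs), abs_of_nonneg (by norm_num : (0:ℝ) ≤ 2)]
        nlinarith
    · have ihh := ih h2
      push_cast at ihh ⊢
      rw [show ((k:ℝ) + 1) * t = (k:ℝ) * t + t by ring, Real.sin_add]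
      have h1 : |Real.sin ((k:ℝ)*t) * Real.cos t| ≤ |Real.sin ((k:ℝ)*t)| := by
        rw [abs_mul]; exact mul_le_of_le_one_right (abs_nonneg _) (Real.abs_cos_le_one t)
      have h2' : |Real.cos ((k:ℝ)*t) * Real.sin t| ≤ Real.sin t := by
        rw [abs_mul, abs_of_nonneg (le_of_lt hs)]
        exact mul_le_of_le_one_left (le_of_lt hs) (Real.abs_cos_le_one _)
      have h3 := abs_add_le (Real.sin ((k:ℝ)*t) * Real.cos t) (Real.cos ((k:ℝ)*t) * Real.sin t)
      calc |Real.sin ((k:ℝ)*t) * Real.cos t + Real.cos ((k:ℝ)*t) * Real.sin t|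
          ≤ |Real.sin ((k:ℝ)*t)| + Real.sin t := by linarith
        _ < (k:ℝ) * Real.sin t + Real.sin t := by linarith
        _ = ((k:ℝ) + 1) * Real.sin t := by ring


lemma sum_swap_tri (n : ℕ) (f : ℕ → ℕ → ℝ) :
    ∑ j ∈ Finset.Icc 1 n, ∑ k ∈ Finset.range (n - j + 1), f j k
      = ∑ k ∈ Finset.range n, ∑ j ∈ Finset.Icc 1 (n - k), f j k := by
  rw [Finset.sum_sigma', Finset.sum_sigma']
  refine Finset.sum_nbij' (fun p => ⟨p.2, p.1⟩) (fun p => ⟨p.2, p.1⟩) ?_ ?_ ?_ ?_ ?_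
  · rintro ⟨j, k⟩ h
    simp only [Finset.mem_sigma, Finset.mem_Icc, Finset.mem_range] at h ⊢
    omega
  · rintro ⟨k, j⟩ h
    simp only [Finset.mem_sigma, Finset.mem_Icc, Finset.mem_range] at h ⊢
    omega
  · rintro ⟨j, k⟩ _; rfl
  · rintro ⟨k, j⟩ _; rfl
  · rintro ⟨j, k⟩ _; rfl

lemma phi_step_id (m t : ℝ) :
    (m + 3) * Real.sin t - Real.sin ((m + 3) * t)
      = (m + 1) * Real.sin t - Real.sin ((m + 1) * t)
        + 2 * Real.sin t * (1 - Real.cos ((m + 2) * t)) := by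
  rw [show (m + 3) * t = (m + 2) * t + t by ring, Real.sin_add,
      show (m + 1) * t = (m + 2) * t - t by ring, Real.sin_sub]
  ring

lemma phi_mono_even {t : ℝ} (ht0 : 0 ≤ t) (htp : t ≤ Real.pi) (m p : ℕ) :
    ((m:ℝ) + 1) * Real.sin t - Real.sin (((m:ℝ) + 1) * t)
      ≤ ((m:ℝ) + 2 * p + 1) * Real.sin t - Real.sin (((m:ℝ) + 2 * p + 1) * t) := by
  induction p with
  | zero => push_cast; ring_nf; exact le_refl _
  | succ p ih =>
    have hs : 0 ≤ Real.sin t := Real.sin_nonneg_of_nonneg_of_le_pi ht0 htp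
    have hstep := phi_step_id ((m:ℝ) + 2 * p) t
    have hcos : Real.cos (((m:ℝ) + 2 * p + 2) * t) ≤ 1 := Real.cos_le_one _
    push_cast
    have e1 : (m:ℝ) + 2 * ((p:ℝ) + 1) + 1 = ((m:ℝ) + 2 * p) + 3 := by ring
    have e2 : (m:ℝ) + 2 * (p:ℝ) + 1 = ((m:ℝ) + 2 * p) + 1 := by ring
    rw [e1]
    rw [e2] at ih
    nlinarith [ih, hstep, mul_nonneg hs (by linarith : (0:ℝ) ≤ 1 - Real.cos (((m:ℝ) + 2*p + 2) * t))]



lemma S_decomp (n : ℕ) (a t : ℝ) :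
    S n a t = ∑ k ∈ Finset.range n, gbinom (a - 2) k * F (n - k) t := by
  have step1 : S n a t = ∑ j ∈ Finset.Icc 1 n,
      ∑ k ∈ Finset.range (n - j + 1), ((n:ℝ) - j + 1 - k) * gbinom (a - 2) k * Real.sin (j * t) := by
    rw [S]
    refine Finset.sum_congr rfl fun j hj => ?_
    rw [Finset.mem_Icc] at hj
    have hcast : ((n - j : ℕ) : ℝ) = (n:ℝ) - j := by
      rw [Nat.cast_sub hj.2]
    have hv := gbinom_vandermonde (a - 2) (n - j)
    rw [show a - 2 + 2 = a by ring, hcast] at hv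
    rw [hv, Finset.sum_mul]
  rw [step1, sum_swap_tri n (fun j k => ((n:ℝ) - j + 1 - k) * gbinom (a - 2) k * Real.sin (j * t))]
  refine Finset.sum_congr rfl fun k hk => ?_
  rw [Finset.mem_range] at hk
  rw [F, Finset.mul_sum]
  refine Finset.sum_congr rfl fun j hj => ?_
  rw [Finset.mem_Icc] at hj
  have hcast : ((n - k : ℕ) : ℝ) = (n:ℝ) - k := by
    rw [Nat.cast_sub (le_of_lt hk)]
  rw [hcast]
  ring



lemma one_sub_cos_pos {t : ℝ} (ht0 : 0 < t) (htp : t < Real.pi) : 0 < 1 - Real.cos t := by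
  have hs : 0 < Real.sin t := Real.sin_pos_of_pos_of_lt_pi ht0 htp
  nlinarith [Real.sin_sq t, Real.neg_one_le_cos t]

lemma phi_nonneg {t : ℝ} (ht : 0 ≤ Real.sin t) (m : ℕ) :
    0 ≤ ((m:ℝ) + 1) * Real.sin t - Real.sin (((m:ℝ) + 1) * t) := by
  have h := abs_sin_nat_le ht (m + 1)
  push_cast at h
  have := neg_abs_le (Real.sin (((m:ℝ) + 1) * t))
  have h2 := le_abs_self (Real.sin (((m:ℝ) + 1) * t))
  linarith

lemma phi_pos {t : ℝ} (ht0 : 0 < t) (htp : t < Real.pi) (m : ℕ) (hm : 1 ≤ m) :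
    0 < ((m:ℝ) + 1) * Real.sin t - Real.sin (((m:ℝ) + 1) * t) := by
  have h := abs_sin_nat_lt ht0 htp (k := m + 1) (by omega)
  push_cast at h
  have h2 := le_abs_self (Real.sin (((m:ℝ) + 1) * t))
  linarith

lemma F_nonneg {t : ℝ} (ht0 : 0 < t) (htp : t < Real.pi) (m : ℕ) : 0 ≤ F m t := by
  have hc := one_sub_cos_pos ht0 htp
  have h := F_closed m t
  have hp := phi_nonneg (le_of_lt (Real.sin_pos_of_pos_of_lt_pi ht0 htp)) m
  nlinarith

lemma F_pos {t : ℝ} (ht0 : 0 < t) (htp : t < Real.pi) {m : ℕ} (hm : 1 ≤ m) : 0 < F m t := by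
  have hc := one_sub_cos_pos ht0 htp
  have h := F_closed m t
  have hp := phi_pos ht0 htp m hm
  nlinarith

lemma F2_le_Fn {t : ℝ} (ht0 : 0 < t) (htp : t < Real.pi) {n : ℕ} (hn : 2 ≤ n)
    (heven : Even n) : F 2 t ≤ F n t := by
  have hc := one_sub_cos_pos ht0 htp
  obtain ⟨p, hp⟩ : ∃ p, n = 2 + 2 * p := by
    obtain ⟨r, hr⟩ := heven
    exact ⟨r - 1, by omega⟩
  have hmono := phi_mono_even (le_of_lt ht0) (le_of_lt htp) 2 p
  have h2 := F_closed 2 t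
  have hn' := F_closed n t
  rw [hp]
  rw [hp] at hn'
  push_cast at hn' h2 hmono ⊢
  nlinarith [hn', h2, hmono]

lemma F2_lt_Fn {t : ℝ} (ht0 : 0 < t) (htp : t < Real.pi) (htne : t ≠ Real.pi / 2)
    {n : ℕ} (hn : 4 ≤ n) (heven : Even n) : F 2 t < F n t := by
  have hc := one_sub_cos_pos ht0 htp
  have hs : 0 < Real.sin t := Real.sin_pos_of_pos_of_lt_pi ht0 htp
  -- sin (2t) ≠ 0
  have hsin2 : Real.sin (2 * t) ≠ 0 := by
    intro h
    rw [Real.sin_eq_zero_iff] at h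
    obtain ⟨z, hz⟩ := h
    have hπ := Real.pi_pos
    have hz0 : 0 < (z:ℝ) * Real.pi := by rw [hz]; linarith
    have hz2 : (z:ℝ) * Real.pi < 2 * Real.pi := by rw [hz]; linarith
    have hπ2 : (0:ℝ) < Real.pi := hπ
    have hz1 : z = 1 := by
      have h1 : (0:ℝ) < (z:ℝ) := (mul_lt_mul_iff_of_pos_right hπ2).mp (by linarith : (0:ℝ) * Real.pi < (z:ℝ) * Real.pi)
      have h2 : ((z:ℝ)) < 2 := (mul_lt_mul_iff_of_pos_right hπ2).mp (by linarith : (z:ℝ) * Real.pi < 2 * Real.pi)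
      have h1' : 0 < z := by exact_mod_cast h1
      have h2' : z < 2 := by exact_mod_cast h2
      omega
    rw [hz1] at hz
    push_cast at hz
    apply htne
    linarith
  have hcos4 : Real.cos (4 * t) < 1 := by
    have h4 : Real.cos (4 * t) = 2 * Real.cos (2 * t) ^ 2 - 1 := by
      rw [show (4:ℝ) * t = 2 * (2 * t) by ring, Real.cos_two_mul]
    have hsq : Real.sin (2*t) ^ 2 + Real.cos (2*t) ^ 2 = 1 := Real.sin_sq_add_cos_sq _
    have : 0 < Real.sin (2*t) ^ 2 := by positivity
    nlinarith
  -- φ(4) = φ(2) + 2 sin t (1 - cos 4t)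
  have hstep := phi_step_id 2 t
  norm_num at hstep
  obtain ⟨p, hp⟩ : ∃ p, n = 4 + 2 * p := by
    obtain ⟨r, hr⟩ := heven
    exact ⟨r - 2, by omega⟩
  have hmono := phi_mono_even (le_of_lt ht0) (le_of_lt htp) 4 p
  have h2 := F_closed 2 t
  have h4c := F_closed 4 t
  have hn' := F_closed n t
  rw [hp] at hn'
  rw [hp]
  push_cast at hn' h2 h4c hmono ⊢
  norm_num at hn' h2 h4c hmono
  nlinarith [hn', h2, h4c, hmono, hstep, mul_pos hs (by linarith : (0:ℝ) < 1 - Real.cos (4 * t))]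

lemma S_split (n : ℕ) (a t : ℝ) (hn : 2 ≤ n) :
    S n a t = F n t + gbinom (a - 2) 1 * F (n - 1) t
      + ∑ k ∈ ((Finset.range n).erase 0).erase 1, gbinom (a - 2) k * F (n - k) t := by
  rw [S_decomp]
  have h0 : 0 ∈ Finset.range n := by simp; omega
  rw [← Finset.sum_erase_add _ _ h0]
  have h1 : 1 ∈ (Finset.range n).erase 0 := by
    simp [Finset.mem_erase]; omega
  rw [← Finset.sum_erase_add _ _ h1]
  simp [gbinom]
  ring

lemma oneD_ge {n : ℕ} (hn : 2 ≤ n) (heven : Even n) {a : ℝ} (ha : 1 ≤ a)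
    {t : ℝ} (ht0 : 0 < t) (htp : t < Real.pi) : F 2 t ≤ S n a t := by
  rw [S_split n a t hn]
  have hterm1 : 0 ≤ gbinom (a - 2) 1 * F (n - 1) t :=
    mul_nonneg (gbinom_nonneg (by linarith) 1) (F_nonneg ht0 htp _)
  have hrest : 0 ≤ ∑ k ∈ ((Finset.range n).erase 0).erase 1, gbinom (a - 2) k * F (n - k) t :=
    Finset.sum_nonneg fun k _ =>
      mul_nonneg (gbinom_nonneg (by linarith) k) (F_nonneg ht0 htp _)
  have := F2_le_Fn ht0 htp hn heven
  linarith

lemma oneD_gt_a {n : ℕ} (hn : 2 ≤ n) (heven : Even n) {a : ℝ} (ha : 1 < a)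
    {t : ℝ} (ht0 : 0 < t) (htp : t < Real.pi) : F 2 t < S n a t := by
  rw [S_split n a t hn]
  have hg1 : gbinom (a - 2) 1 = a - 1 := by simp [gbinom]; ring
  have hterm1 : 0 < gbinom (a - 2) 1 * F (n - 1) t := by
    rw [hg1]
    exact mul_pos (by linarith) (F_pos ht0 htp (by omega))
  have hrest : 0 ≤ ∑ k ∈ ((Finset.range n).erase 0).erase 1, gbinom (a - 2) k * F (n - k) t :=
    Finset.sum_nonneg fun k _ =>
      mul_nonneg (gbinom_nonneg (by linarith) k) (F_nonneg ht0 htp _)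
  have := F2_le_Fn ht0 htp hn heven
  linarith

lemma oneD_gt_n {n : ℕ} (hn : 4 ≤ n) (heven : Even n) {a : ℝ} (ha : 1 ≤ a)
    {t : ℝ} (ht0 : 0 < t) (htp : t < Real.pi) (htne : t ≠ Real.pi / 2) :
    F 2 t < S n a t := by
  rw [S_split n a t (by omega)]
  have hterm1 : 0 ≤ gbinom (a - 2) 1 * F (n - 1) t :=
    mul_nonneg (gbinom_nonneg (by linarith) 1) (F_nonneg ht0 htp _)
  have hrest : 0 ≤ ∑ k ∈ ((Finset.range n).erase 0).erase 1, gbinom (a - 2) k * F (n - k) t :=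
    Finset.sum_nonneg fun k _ =>
      mul_nonneg (gbinom_nonneg (by linarith) k) (F_nonneg ht0 htp _)
  have := F2_lt_Fn ht0 htp htne hn heven
  linarith

lemma S21_eq_F2 (t : ℝ) : S 2 1 t = F 2 t := by
  have h2 : Finset.Icc 1 2 = {1, 2} := by decide
  rw [S, F, h2, Finset.sum_pair (by decide : (1:ℕ) ≠ 2),
      Finset.sum_pair (by decide : (1:ℕ) ≠ 2)]
  norm_num [gbinom]



lemma S_cont (n : ℕ) (a : ℝ) : Continuous (fun t => S n a t) := by
  unfold S
  exact continuous_finset_sum _ fun j _ =>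
    continuous_const.mul (Real.continuous_sin.comp (continuous_const.mul continuous_id))

lemma S_intable (n : ℕ) (a : ℝ) (u v : ℝ) :
    IntervalIntegrable (fun t => S n a t) MeasureTheory.volume u v :=
  (S_cont n a).intervalIntegrable u v

lemma integral_sin_jt {j : ℕ} (hj : 1 ≤ j) (u v : ℝ) :
    ∫ t in u..v, Real.sin ((j:ℝ) * t) = (Real.cos ((j:ℝ) * u) - Real.cos ((j:ℝ) * v)) / j := by
  have hj0 : (j:ℝ) ≠ 0 := by positivity
  rw [intervalIntegral.integral_comp_mul_left Real.sin hj0, integral_sin]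
  rw [smul_eq_mul]
  field_simp

lemma intS (n : ℕ) (a : ℝ) (u v : ℝ) :
    ∫ t in u..v, S n a t
      = ∑ j ∈ Finset.Icc 1 n, gbinom a (n - j) * ((Real.cos ((j:ℝ) * u) - Real.cos ((j:ℝ) * v)) / j) := by
  unfold S
  have hint : ∀ j ∈ Finset.Icc 1 n, IntervalIntegrable
      (fun t => gbinom a (n - j) * Real.sin ((j:ℝ) * t)) MeasureTheory.volume u v :=
    fun j _ => Continuous.intervalIntegrable (by fun_prop) u v
  rw [intervalIntegral.integral_finset_sum hint]
  refine Finset.sum_congr rfl fun j hj => ?_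
  rw [Finset.mem_Icc] at hj
  rw [intervalIntegral.integral_const_mul, integral_sin_jt hj.1]

lemma Theta_eq (n : ℕ) (a : ℝ) (x y : ℝ) :
    Theta n a x y = (1/2) * ∫ t in (x - y)..(x + y), S n a t := by
  rw [intS, Theta, Finset.mul_sum]
  refine Finset.sum_congr rfl fun j hj => ?_
  rw [Finset.mem_Icc] at hj
  have hj0 : (j:ℝ) ≠ 0 := by
    have : (1:ℝ) ≤ (j:ℝ) := by exact_mod_cast hj.1
    linarith
  have hcc : Real.cos ((j:ℝ) * (x - y)) - Real.cos ((j:ℝ) * (x + y))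
      = 2 * Real.sin ((j:ℝ) * x) * Real.sin ((j:ℝ) * y) := by
    rw [Real.cos_sub_cos]
    rw [show ((j:ℝ) * (x - y) + (j:ℝ) * (x + y)) / 2 = (j:ℝ) * x by ring]
    rw [show ((j:ℝ) * (x - y) - (j:ℝ) * (x + y)) / 2 = -((j:ℝ) * y) by ring]
    rw [Real.sin_neg]
    ring
  rw [hcc]
  field_simp

lemma S_neg (n : ℕ) (a : ℝ) (t : ℝ) : S n a (-t) = - S n a t := by
  unfold S
  rw [← Finset.sum_neg_distrib]
  refine Finset.sum_congr rfl fun j _ => ?_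
  rw [mul_neg, Real.sin_neg]
  ring

lemma S_reflect (n : ℕ) (a : ℝ) (t : ℝ) : S n a (2 * Real.pi - t) = - S n a t := by
  unfold S
  rw [← Finset.sum_neg_distrib]
  refine Finset.sum_congr rfl fun j _ => ?_
  have hsin : Real.sin ((j:ℝ) * (2 * Real.pi)) = 0 := by
    have := Real.sin_int_mul_pi (2 * j)
    push_cast at this
    rw [show (j:ℝ) * (2 * Real.pi) = 2 * j * Real.pi by ring]
    exact this
  have hcos : Real.cos ((j:ℝ) * (2 * Real.pi)) = 1 := Real.cos_nat_mul_two_pi j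
  rw [show (j:ℝ) * (2 * Real.pi - t) = (j:ℝ) * (2 * Real.pi) - (j:ℝ) * t by ring,
    Real.sin_sub, hsin, hcos]
  ring

lemma int_S_symm (n : ℕ) (a : ℝ) (c : ℝ) : ∫ t in (-c)..c, S n a t = 0 := by
  have h1 : ∫ t in (0:ℝ)..c, S n a (-t) = ∫ t in (-c)..(0:ℝ), S n a t := by
    simpa using intervalIntegral.integral_comp_neg (fun t => S n a t) (a := 0) (b := c)
  have h2 : ∫ t in (0:ℝ)..c, S n a (-t) = - ∫ t in (0:ℝ)..c, S n a t := by
    simp_rw [S_neg]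
    rw [intervalIntegral.integral_neg]
  rw [← intervalIntegral.integral_add_adjacent_intervals
    (S_intable n a (-c) 0) (S_intable n a 0 c), ← h1, h2]
  ring

lemma int_S_reflect (n : ℕ) (a : ℝ) (u v : ℝ) :
    ∫ t in u..v, S n a t = - ∫ t in (2*Real.pi - v)..(2*Real.pi - u), S n a t := by
  have h1 : ∫ t in (2*Real.pi - v)..(2*Real.pi - u), S n a (2*Real.pi - t)
      = ∫ t in u..v, S n a t := by
    have := intervalIntegral.integral_comp_sub_left (fun t => S n a t) (2*Real.pi)
      (a := 2*Real.pi - v) (b := 2*Real.pi - u)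
    simpa using this
  have h2 : ∫ t in (2*Real.pi - v)..(2*Real.pi - u), S n a (2*Real.pi - t)
      = - ∫ t in (2*Real.pi - v)..(2*Real.pi - u), S n a t := by
    simp_rw [S_reflect]
    rw [intervalIntegral.integral_neg]
  rw [← h1, h2]

lemma int_reduce (n : ℕ) (a : ℝ) {x y : ℝ} (hx : x ∈ Set.Ioo 0 Real.pi)
    (hy : y ∈ Set.Ioo 0 Real.pi) :
    ∫ t in (x - y)..(x + y), S n a t
      = ∫ t in |x - y|..(min (x + y) (2 * Real.pi - (x + y))), S n a t := by
  obtain ⟨hx0, hxp⟩ := hx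
  obtain ⟨hy0, hyp⟩ := hy
  have step1 : ∫ t in (x - y)..(x + y), S n a t = ∫ t in |x - y|..(x + y), S n a t := by
    rcases le_or_gt y x with h | h
    · rw [abs_of_nonneg (by linarith)]
    · rw [abs_of_neg (by linarith)]
      have hsplit := intervalIntegral.integral_add_adjacent_intervals
        (S_intable n a (x - y) (-(x - y))) (S_intable n a (-(x - y)) (x + y))
      have hz : ∫ t in (x - y)..(-(x - y)), S n a t = 0 := by
        have := int_S_symm n a (-(x - y))
        rwa [neg_neg] at this
      linarith
  rw [step1]
  rcases le_or_gt (x + y) Real.pi with h | h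
  · rw [min_eq_left (by linarith [Real.pi_pos])]
  · have hm : min (x + y) (2 * Real.pi - (x + y)) = 2 * Real.pi - (x + y) := by
      rw [min_eq_right (by linarith)]
    rw [hm]
    have hzero : ∫ t in (2 * Real.pi - (x + y))..(x + y), S n a t = 0 := by
      have := int_S_reflect n a (2 * Real.pi - (x + y)) (x + y)
      rw [show 2 * Real.pi - (x + y) = 2*Real.pi - (x+y) by ring] at this
      have h2 : (2 * Real.pi - (2 * Real.pi - (x + y))) = x + y := by ring
      rw [h2] at this
      linarith
    rw [← intervalIntegral.integral_add_adjacent_intervals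
      (S_intable n a (|x - y|) (2 * Real.pi - (x + y)))
      (S_intable n a (2 * Real.pi - (x + y)) (x + y)), hzero]
    ring


lemma Theta21 (x y : ℝ) :
    Theta 2 1 x y = 2 * Real.sin x * Real.sin y * (1 + Real.cos x * Real.cos y) := by
  have h2 : Finset.Icc 1 2 = {1, 2} := by decide
  rw [Theta, h2, Finset.sum_pair (by decide : (1:ℕ) ≠ 2)]
  norm_num [gbinom]
  rw [Real.sin_two_mul, Real.sin_two_mul]
  ring

lemma g_nonneg {n : ℕ} (hn : 2 ≤ n) (heven : Even n) {a : ℝ} (ha : 1 ≤ a)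
    {t : ℝ} (ht : t ∈ Set.Icc 0 Real.pi) : 0 ≤ S n a t - S 2 1 t := by
  obtain ⟨ht0, htp⟩ := ht
  rcases eq_or_lt_of_le ht0 with h0 | h0
  · simp [S, ← h0]
  rcases eq_or_lt_of_le htp with hp | hp
  · have hz : ∀ (m : ℕ) (b : ℝ), S m b Real.pi = 0 := by
      intro m b
      rw [S]
      apply Finset.sum_eq_zero
      intro j _
      rw [Real.sin_nat_mul_pi]
      ring
    rw [hp, hz, hz]
    norm_num
  · rw [S21_eq_F2]
    linarith [oneD_ge hn heven ha h0 hp]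

theorem stmt_13 (n : ℕ) (hn : 2 ≤ n) (heven : Even n) (a : ℝ) (ha : 1 ≤ a)
    (x y : ℝ) (hx : x ∈ Set.Ioo 0 Real.pi) (hy : y ∈ Set.Ioo 0 Real.pi) :
    2 * Real.sin x * Real.sin y * (1 + Real.cos x * Real.cos y) ≤ Theta n a x y ∧
    (Theta n a x y = 2 * Real.sin x * Real.sin y * (1 + Real.cos x * Real.cos y) ↔
      n = 2 ∧ a = 1) := by
  obtain ⟨hx0, hxp⟩ := hx
  obtain ⟨hy0, hyp⟩ := hy
  have hπ := Real.pi_pos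
  set d := |x - y| with hd
  set m := min (x + y) (2 * Real.pi - (x + y)) with hm
  have hd0 : 0 ≤ d := abs_nonneg _
  have hdm : d < m := by
    have : |x - y| < min (x + y) (2 * Real.pi - (x + y)) := by
      rcases abs_cases (x - y) with ⟨h1, h2⟩ | ⟨h1, h2⟩ <;> rw [h1] <;>
        exact lt_min (by linarith) (by linarith)
    rw [hd, hm]
    exact this
  have hmπ : m ≤ Real.pi := by
    rcases le_total (x + y) Real.pi with h | h
    · exact le_trans (min_le_left _ _) h
    · exact le_trans (min_le_right _ _) (by linarith)
  have hsub : ∀ u v : ℝ, IntervalIntegrable (fun t => S n a t - S 2 1 t)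
      MeasureTheory.volume u v :=
    fun u v => ((S_cont n a).sub (S_cont 2 1)).intervalIntegrable u v
  have hInt : Theta n a x y - Theta 2 1 x y
      = (1/2) * ∫ t in d..m, (S n a t - S 2 1 t) := by
    rw [Theta_eq n a x y, Theta_eq 2 1 x y,
        int_reduce n a ⟨hx0, hxp⟩ ⟨hy0, hyp⟩, int_reduce 2 1 ⟨hx0, hxp⟩ ⟨hy0, hyp⟩,
        ← hd, ← hm,
        intervalIntegral.integral_sub (S_intable n a d m) (S_intable 2 1 d m)]
    ring
  have hIcc : ∀ t ∈ Set.Icc d m, 0 ≤ S n a t - S 2 1 t := fun t ht =>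
    g_nonneg hn heven ha ⟨le_trans hd0 ht.1, le_trans ht.2 hmπ⟩
  have hmain : Theta 2 1 x y ≤ Theta n a x y := by
    have h0 := intervalIntegral.integral_nonneg (μ := MeasureTheory.volume) (le_of_lt hdm) hIcc
    linarith
  have hstrict : ¬(n = 2 ∧ a = 1) → Theta 2 1 x y < Theta n a x y := by
    intro hne
    have hpos : 0 < ∫ t in d..m, (S n a t - S 2 1 t) := by
      rcases eq_or_lt_of_le ha with ha1 | ha1
      · -- a = 1, so n ≥ 4
        have hn4 : 4 ≤ n := by
          by_contra h4
          obtain ⟨r, hr⟩ := heven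
          exact hne ⟨by omega, ha1.symm⟩
        set u := (d + m) / 2 with hu
        have hdu : d < u := by rw [hu]; linarith
        have hum : u < m := by rw [hu]; linarith
        have hadd := intervalIntegral.integral_add_adjacent_intervals
          (μ := MeasureTheory.volume) (hsub d u) (hsub u m)
        rcases le_or_gt (Real.pi / 2) u with hcase | hcase
        · have h1 : 0 ≤ ∫ t in d..u, (S n a t - S 2 1 t) :=
            intervalIntegral.integral_nonneg (le_of_lt hdu)
              (fun t ht => hIcc t ⟨ht.1, le_trans ht.2 (le_of_lt hum)⟩)
          have h2 : 0 < ∫ t in u..m, (S n a t - S 2 1 t) := by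
            refine intervalIntegral.intervalIntegral_pos_of_pos_on (hsub u m) ?_ hum
            intro t ht
            have ht0 : 0 < t := lt_of_le_of_lt (le_trans hd0 (le_of_lt hdu)) ht.1
            have htp : t < Real.pi := lt_of_lt_of_le ht.2 hmπ
            have htne : t ≠ Real.pi / 2 := ne_of_gt (lt_of_le_of_lt hcase ht.1)
            rw [S21_eq_F2]
            have := oneD_gt_n hn4 heven ha ht0 htp htne
            linarith
          linarith
        · have h1 : 0 ≤ ∫ t in u..m, (S n a t - S 2 1 t) :=
            intervalIntegral.integral_nonneg (le_of_lt hum)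
              (fun t ht => hIcc t ⟨le_trans (le_of_lt hdu) ht.1, ht.2⟩)
          have h2 : 0 < ∫ t in d..u, (S n a t - S 2 1 t) := by
            refine intervalIntegral.intervalIntegral_pos_of_pos_on (hsub d u) ?_ hdu
            intro t ht
            have ht0 : 0 < t := lt_of_le_of_lt hd0 ht.1
            have htp : t < Real.pi := lt_of_lt_of_le (lt_trans ht.2 hum) hmπ
            have htne : t ≠ Real.pi / 2 := ne_of_lt (lt_trans ht.2 hcase)
            rw [S21_eq_F2]
            have := oneD_gt_n hn4 heven ha ht0 htp htne
            linarith
          linarith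
      · refine intervalIntegral.intervalIntegral_pos_of_pos_on (hsub d m) ?_ hdm
        intro t ht
        have ht0 : 0 < t := lt_of_le_of_lt hd0 ht.1
        have htp : t < Real.pi := lt_of_lt_of_le ht.2 hmπ
        rw [S21_eq_F2]
        have := oneD_gt_a hn heven ha1 ht0 htp
        linarith
    linarith
  refine ⟨by rw [← Theta21 x y]; exact hmain, ?_, ?_⟩
  · intro heq
    by_contra hne
    have h1 := hstrict hne
    rw [Theta21] at h1
    linarith [heq.ge, heq.le, h1]
  · rintro ⟨rfl, rfl⟩
    exact Theta21 x y
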